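/- arXiv:0911.0534 — 3 statements merged into one kernel-verified Lean document; each statement's English description precedes it below -/
import Mathlib

section
/- Fix a real γ with 0 ≤ γ < 1, a real σ and n ≥ 1 with σ-(n-1) > 0. If q is analytic on the unit disk with q(0)=1 and Re q(z) > γ for all z in the disk, then the function Q(z) = ((σ-(n-1))/z^{σ-(n-1)}) ∫_0^z t^{σ-n} q(t) dt (extended by Q(0)=1) also satisfies Re Q(z) > γ on the unit disk. -/
open Complex MeasureTheory

/-- The Carathéodory class `P`: analytic on the unit disk, value `1` at `0`,
positive real part. -/
def IsCara (p : ℂ → ℂ) : Prop :=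
  DifferentiableOn ℂ p (Metric.ball 0 1) ∧ p 0 = 1 ∧
    ∀ z ∈ Metric.ball (0 : ℂ) 1, 0 < (p z).re

/-- The σ-nth integral iterate (averaged form after substituting `t = s z`):
`p_{σ,n}(z) = (σ-(n-1)) ∫_0^1 s^(σ-n) p_{σ,n-1}(s z) ds`. -/
noncomputable def sigmaIter (σ : ℝ) : ℕ → (ℂ → ℂ) → (ℂ → ℂ)
  | 0, p => p
  | (n + 1), p => fun z =>
      ((σ - (n : ℝ)) : ℂ) *
        ∫ s in (0 : ℝ)..1, ((s ^ (σ - ((n : ℝ) + 1)) : ℝ) : ℂ) * sigmaIter σ n p ((s : ℂ) * z)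

/-- The coefficient multiplier `[σ]_{n/k} = (σ-(n-1))_n / (σ+k-(n-1))_n`
(Pochhammer / rising factorial). -/
noncomputable def poch (σ : ℝ) (n k : ℕ) : ℝ :=
  (ascPochhammer ℝ n).eval (σ - ((n : ℝ) - 1)) /
    (ascPochhammer ℝ n).eval (σ + (k : ℝ) - ((n : ℝ) - 1))

/-- Membership in `P_n^σ`. -/
def MemPn (σ : ℝ) (n : ℕ) (q : ℂ → ℂ) : Prop :=
  ∃ p : ℂ → ℂ, IsCara p ∧ ∀ z ∈ Metric.ball (0 : ℂ) 1, q z = sigmaIter σ n p z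

/-- Membership in `B_n^σ(β)`: `f(z) = z (β + (1-β) p_{σ,n}(z))` for some Carathéodory `p`. -/
def MemB (σ : ℝ) (n : ℕ) (β : ℝ) (f : ℂ → ℂ) : Prop :=
  ∃ p : ℂ → ℂ, IsCara p ∧ ∀ z ∈ Metric.ball (0 : ℂ) 1,
    f z = z * ((β : ℂ) + ((1 : ℂ) - β) * sigmaIter σ n p z)

/-! The substitution `t = s z` writes `Q(z)` as an average of `q` along the segment `[0, z]`
against the probability density `c s^(c-1)` on `[0, 1]`, `c = σ - (n - 1)`. The segment stays
in the disk, where `Re q > γ`, so the average has real part `> γ` as well. -/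

theorem Complex.re_intervalIntegral_ofReal_mul {w : ℝ → ℝ} {f : ℝ → ℂ} {a b : ℝ}
    (hwf : IntervalIntegrable (fun s => (w s : ℂ) * f s) volume a b) :
    (∫ s in a..b, (w s : ℂ) * f s).re = ∫ s in a..b, w s * (f s).re := by
  rw [← reCLM_apply, ← reCLM.intervalIntegral_comp_comm hwf]
  simp only [reCLM_apply, re_ofReal_mul]

theorem lt_re_intervalIntegral_ofReal_mul {w : ℝ → ℝ} {f : ℝ → ℂ} {a b γ : ℝ} (hab : a < b)
    (hw : IntervalIntegrable w volume a b) (hf : ContinuousOn f (Set.uIcc a b))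
    (hw_pos : ∀ s ∈ Set.Ioo a b, 0 < w s) (hγ : ∀ s ∈ Set.Ioo a b, γ < (f s).re) :
    γ * ∫ s in a..b, w s < (∫ s in a..b, (w s : ℂ) * f s).re := by
  have hwC : IntervalIntegrable (fun s => (w s : ℂ)) volume a b := ⟨hw.1.ofReal, hw.2.ofReal⟩
  have hwf_re : IntervalIntegrable (fun s => w s * (f s).re) volume a b :=
    hw.mul_continuousOn (continuous_re.comp_continuousOn hf)
  have hwγ : IntervalIntegrable (fun s => w s * γ) volume a b := hw.mul_const γ
  have hgap : 0 < ∫ s in a..b, (w s * (f s).re - w s * γ) := by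
    refine intervalIntegral.intervalIntegral_pos_of_pos_on (hwf_re.sub hwγ) (fun s hs => ?_) hab
    rw [← mul_sub]
    exact mul_pos (hw_pos s hs) (sub_pos.2 (hγ s hs))
  rw [re_intervalIntegral_ofReal_mul (hwC.mul_continuousOn hf), mul_comm,
    ← intervalIntegral.integral_mul_const]
  rw [intervalIntegral.integral_sub hwf_re hwγ] at hgap
  linarith

theorem ofReal_mul_mem_ball_zero_one {z : ℂ} (hz : z ∈ Metric.ball (0 : ℂ) 1) {s : ℝ}
    (hs : s ∈ Set.Icc (0 : ℝ) 1) : (s : ℂ) * z ∈ Metric.ball (0 : ℂ) 1 := by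
  rw [← real_smul]
  exact (convex_ball 0 1).smul_mem_of_zero_mem (Metric.mem_ball_self one_pos) hz hs

theorem intervalIntegral_rpow_zero_one {α : ℝ} (hα : -1 < α) :
    ∫ s in (0 : ℝ)..1, s ^ α = 1 / (α + 1) := by
  rw [integral_rpow (Or.inl hα), Real.one_rpow, Real.zero_rpow (by linarith)]
  ring

theorem stmt3_general (γ σ : ℝ) (n : ℕ)
    (hσ : 0 < σ - ((n : ℝ) - 1))
    (q : ℂ → ℂ) (hq : DifferentiableOn ℂ q (Metric.ball 0 1))
    (hre : ∀ z ∈ Metric.ball (0 : ℂ) 1, γ < (q z).re) :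
    ∀ z ∈ Metric.ball (0 : ℂ) 1,
      γ < (((σ - ((n : ℝ) - 1)) : ℂ) *
        ∫ s in (0 : ℝ)..1, ((s ^ (σ - (n : ℝ)) : ℝ) : ℂ) * q ((s : ℂ) * z)).re := by
  intro z hz
  have hα : (-1 : ℝ) < σ - n := by linarith
  have hsegment : ContinuousOn (fun s : ℝ => q ((s : ℂ) * z)) (Set.uIcc 0 1) := by
    refine hq.continuousOn.comp (by fun_prop) fun s hs => ofReal_mul_mem_ball_zero_one hz ?_
    rwa [Set.uIcc_of_le zero_le_one] at hs
  have haverage := lt_re_intervalIntegral_ofReal_mul zero_lt_one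
    (intervalIntegral.intervalIntegrable_rpow' hα) hsegment
    (fun s hs => Real.rpow_pos_of_pos hs.1 _)
    (fun s hs => hre _ (ofReal_mul_mem_ball_zero_one hz (Set.Ioo_subset_Icc_self hs)))
  rw [intervalIntegral_rpow_zero_one hα, sub_add, mul_one_div, div_lt_iff₀' hσ] at haverage
  rwa [← ofReal_one, ← ofReal_sub, ← ofReal_sub, re_ofReal_mul]

/-- The integral iteration step preserves `Re > γ` for `0 ≤ γ < 1`. -/
theorem stmt3 (γ σ : ℝ) (n : ℕ) (hn : 1 ≤ n) (hγ0 : 0 ≤ γ) (hγ1 : γ < 1)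
    (hσ : 0 < σ - ((n : ℝ) - 1))
    (q : ℂ → ℂ) (hq : DifferentiableOn ℂ q (Metric.ball 0 1)) (hq0 : q 0 = 1)
    (hre : ∀ z ∈ Metric.ball (0 : ℂ) 1, γ < (q z).re) :
    ∀ z ∈ Metric.ball (0 : ℂ) 1,
      γ < (((σ - ((n : ℝ) - 1)) : ℂ) *
        ∫ s in (0 : ℝ)..1, ((s ^ (σ - (n : ℝ)) : ℝ) : ℂ) * q ((s : ℂ) * z)).re :=
  stmt3_general γ σ n hσ q hq hre
end

section
/- For fixed real σ and n ≥ 1 with σ-(n-1) > 0, the family P_n^σ of σ-nth integral iterates of Carathéodory functions is contained in the Carathéodory class P; i.e., every p_{σ,n} satisfies Re p_{σ,n}(z) > 0 on the unit disk. -/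
open Complex MeasureTheory

/-!
The operator `p_{σ,m-1} ↦ p_{σ,m}` is, up to the positive factor `σ - (m-1)`, an average of
`s ↦ p_{σ,m-1}(s z)` over `s ∈ (0,1)` against the positive, integrable weight `s^(σ-m)`.
Such averages preserve continuity on the disk (dominated convergence) and positivity of the real
part (the real part commutes with the integral), so both properties pass from `p` to every
iterate by induction.
-/

noncomputable def radialAverage (w : ℝ → ℝ) (q : ℂ → ℂ) (z : ℂ) : ℂ :=
  ∫ s in (0 : ℝ)..1, (w s : ℂ) * q ((s : ℂ) * z)

lemma sigmaIter_succ (σ : ℝ) (m : ℕ) (p : ℂ → ℂ) (z : ℂ) :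
    sigmaIter σ (m + 1) p z =
      ((σ - m : ℝ) : ℂ) * radialAverage (fun s => s ^ (σ - (m + 1))) (sigmaIter σ m p) z := by
  simp only [sigmaIter, radialAverage]
  push_cast
  rfl

lemma norm_ofReal_mul_le {s : ℝ} (hs : s ∈ Set.Icc (0 : ℝ) 1) (z : ℂ) :
    ‖(s : ℂ) * z‖ ≤ ‖z‖ := by
  rw [norm_mul, Complex.norm_real, Real.norm_of_nonneg hs.1]
  exact mul_le_of_le_one_left (norm_nonneg z) hs.2

lemma ofReal_mul_mem_ball {s : ℝ} (hs : s ∈ Set.Icc (0 : ℝ) 1) {z : ℂ} {r : ℝ}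
    (hz : z ∈ Metric.ball (0 : ℂ) r) : (s : ℂ) * z ∈ Metric.ball (0 : ℂ) r := by
  rw [mem_ball_zero_iff] at hz ⊢
  exact (norm_ofReal_mul_le hs z).trans_lt hz

lemma continuousOn_comp_ofReal_mul {q : ℂ → ℂ} (hq : ContinuousOn q (Metric.ball 0 1)) {z : ℂ}
    (hz : z ∈ Metric.ball (0 : ℂ) 1) :
    ContinuousOn (fun s : ℝ => q ((s : ℂ) * z)) (Set.uIcc 0 1) := by
  rw [Set.uIcc_of_le zero_le_one]
  exact hq.comp (by fun_prop) fun s hs => ofReal_mul_mem_ball hs hz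

lemma intervalIntegrable_radialAverage_integrand {w : ℝ → ℝ}
    (hw : IntervalIntegrable w volume 0 1) {q : ℂ → ℂ}
    (hq : ContinuousOn q (Metric.ball 0 1)) {z : ℂ} (hz : z ∈ Metric.ball (0 : ℂ) 1) :
    IntervalIntegrable (fun s : ℝ => (w s : ℂ) * q ((s : ℂ) * z)) volume 0 1 :=
  IntervalIntegrable.mul_continuousOn ⟨hw.1.ofReal, hw.2.ofReal⟩
    (continuousOn_comp_ofReal_mul hq hz)

lemma continuousOn_radialAverage {w : ℝ → ℝ} (hw : IntervalIntegrable w volume 0 1)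
    {q : ℂ → ℂ} (hq : ContinuousOn q (Metric.ball 0 1)) :
    ContinuousOn (radialAverage w q) (Metric.ball 0 1) := by
  intro z₀ hz₀
  rw [mem_ball_zero_iff] at hz₀
  -- dominate the integrand near `z₀` by `|w| · max_{|ζ| ≤ r} |q ζ|` for some `|z₀| < r < 1`
  obtain ⟨r, hz₀r, hr⟩ := exists_between hz₀
  have hball_r : Metric.closedBall (0 : ℂ) r ⊆ Metric.ball 0 1 :=
    Metric.closedBall_subset_ball hr
  obtain ⟨M, hM⟩ :=
    (isCompact_closedBall (0 : ℂ) r).exists_bound_of_continuousOn (hq.mono hball_r)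
  have hnear : ∀ᶠ z in nhds z₀, z ∈ Metric.ball (0 : ℂ) r :=
    Metric.isOpen_ball.mem_nhds (mem_ball_zero_iff.mpr hz₀r)
  refine (intervalIntegral.continuousAt_of_dominated_interval
    (bound := fun s => ‖w s‖ * M) ?_ ?_ (hw.norm.mul_const M) ?_).continuousWithinAt
  · filter_upwards [hnear] with z hz
    exact (intervalIntegrable_radialAverage_integrand hw hq
      (Metric.ball_subset_ball hr.le hz)).def'.aestronglyMeasurable
  · filter_upwards [hnear] with z hz
    refine Filter.Eventually.of_forall fun s hs => ?_
    rw [Set.uIoc_of_le zero_le_one] at hs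
    have hsz : (s : ℂ) * z ∈ Metric.closedBall (0 : ℂ) r :=
      Metric.ball_subset_closedBall (ofReal_mul_mem_ball (Set.Ioc_subset_Icc_self hs) hz)
    rw [norm_mul, Complex.norm_real]
    exact mul_le_mul_of_nonneg_left (hM _ hsz) (norm_nonneg _)
  · refine Filter.Eventually.of_forall fun s hs => ?_
    rw [Set.uIoc_of_le zero_le_one] at hs
    have hsz₀ : (s : ℂ) * z₀ ∈ Metric.ball (0 : ℂ) 1 :=
      ofReal_mul_mem_ball (Set.Ioc_subset_Icc_self hs) (mem_ball_zero_iff.mpr hz₀)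
    exact continuousAt_const.mul
      ((hq.continuousAt (Metric.isOpen_ball.mem_nhds hsz₀)).comp (by fun_prop))

lemma re_radialAverage_pos {w : ℝ → ℝ} (hw : IntervalIntegrable w volume 0 1)
    (hw_pos : ∀ s ∈ Set.Ioo (0 : ℝ) 1, 0 < w s) {q : ℂ → ℂ}
    (hq : ContinuousOn q (Metric.ball 0 1))
    (hq_pos : ∀ z ∈ Metric.ball (0 : ℂ) 1, 0 < (q z).re) {z : ℂ}
    (hz : z ∈ Metric.ball (0 : ℂ) 1) : 0 < (radialAverage w q z).re := by
  have hint := intervalIntegrable_radialAverage_integrand hw hq hz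
  have hre : (radialAverage w q z).re = ∫ s in (0 : ℝ)..1, w s * (q ((s : ℂ) * z)).re := by
    simp only [radialAverage, ← Complex.reCLM_apply,
      ← Complex.reCLM.intervalIntegral_comp_comm hint]
    simp only [Complex.reCLM_apply, Complex.re_ofReal_mul]
  rw [hre]
  refine intervalIntegral.intervalIntegral_pos_of_pos_on ?_ (fun s hs => ?_) zero_lt_one
  · exact hw.mul_continuousOn (Complex.continuous_re.comp_continuousOn
      (continuousOn_comp_ofReal_mul hq hz))
  · exact mul_pos (hw_pos s hs) (hq_pos _ (ofReal_mul_mem_ball (Set.Ioo_subset_Icc_self hs) hz))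

lemma sigmaIter_continuousOn_and_re_pos {σ : ℝ} {p : ℂ → ℂ}
    (hp : ContinuousOn p (Metric.ball 0 1))
    (hp_pos : ∀ z ∈ Metric.ball (0 : ℂ) 1, 0 < (p z).re) :
    ∀ m : ℕ, 0 < σ - ((m : ℝ) - 1) →
      ContinuousOn (sigmaIter σ m p) (Metric.ball 0 1) ∧
        ∀ z ∈ Metric.ball (0 : ℂ) 1, 0 < (sigmaIter σ m p z).re
  | 0, _ => ⟨hp, hp_pos⟩
  | m + 1, hσ => by
    push_cast at hσ
    obtain ⟨hc, hpos⟩ := sigmaIter_continuousOn_and_re_pos hp hp_pos m (by linarith)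
    have hw : IntervalIntegrable (fun s : ℝ => s ^ (σ - (m + 1))) volume 0 1 :=
      intervalIntegral.intervalIntegrable_rpow' (by linarith)
    have hw_pos : ∀ s ∈ Set.Ioo (0 : ℝ) 1, 0 < s ^ (σ - (m + 1)) :=
      fun s hs => Real.rpow_pos_of_pos hs.1 _
    refine ⟨?_, fun z hz => ?_⟩
    · simp only [funext (sigmaIter_succ σ m p)]
      exact continuousOn_const.mul (continuousOn_radialAverage hw hc)
    · rw [sigmaIter_succ, Complex.re_ofReal_mul]
      exact mul_pos (by linarith) (re_radialAverage_pos hw hw_pos hc hpos hz)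

theorem stmt5_general (σ : ℝ) (n : ℕ) (hσ : 0 < σ - ((n : ℝ) - 1))
    (p : ℂ → ℂ) (hp : IsCara p) :
    ∀ z ∈ Metric.ball (0 : ℂ) 1, 0 < (sigmaIter σ n p z).re :=
  (sigmaIter_continuousOn_and_re_pos hp.1.continuousOn hp.2.2 n hσ).2

/-- `P_n^σ ⊂ P`: the σ-nth integral iterate of a Carathéodory function has
positive real part on the unit disk. -/
theorem stmt5 (σ : ℝ) (n : ℕ) (hn : 1 ≤ n) (hσ : 0 < σ - ((n : ℝ) - 1))
    (p : ℂ → ℂ) (hp : IsCara p) :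
    ∀ z ∈ Metric.ball (0 : ℂ) 1, 0 < (sigmaIter σ n p z).re :=
  stmt5_general σ n hσ p hp
end

section
/- If p_{σ,n} ∈ P_n^σ, then for |z| = r < 1: |p_{σ,n}(z)| ≤ 1 + 2 Σ_{k=1}^∞ [(σ-(n-1))_n/(σ+k-(n-1))_n] r^k. -/
open Complex MeasureTheory

/-!
By Schwarz's lemma applied to the Cayley transform, a Carathéodory function is majorised by
`(1 + r) / (1 - r) = 1 + 2 ∑_{k ≥ 1} r ^ k`. The averaging step
`f ↦ λ ∫₀¹ s ^ (λ - 1) f (s z) ds` multiplies the `k`-th coefficient of such a majorant by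
`λ / (λ + k)`, and the product of these factors over `λ = σ, σ - 1, …, σ - (n - 1)` is
`(σ - (n - 1))_n / (σ + k - (n - 1))_n`.
-/

theorem ascPochhammer_eval_succ_left (n : ℕ) (x : ℝ) :
    (ascPochhammer ℝ (n + 1)).eval x = x * (ascPochhammer ℝ n).eval (x + 1) := by
  simp [ascPochhammer_succ_left, Polynomial.eval_comp]

theorem ascPochhammer_eval_le_eval (n : ℕ) {x y : ℝ} (hx : 0 < x) (hxy : x ≤ y) :
    (ascPochhammer ℝ n).eval x ≤ (ascPochhammer ℝ n).eval y := by
  induction n with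
  | zero => simp
  | succ n ih =>
    simp only [ascPochhammer_succ_eval]
    exact mul_le_mul ih (by linarith) (by positivity)
      (ascPochhammer_pos n y (hx.trans_le hxy)).le

section poch

variable {σ : ℝ} {n : ℕ}

theorem poch_zero_left (σ : ℝ) (k : ℕ) : poch σ 0 k = 1 := by
  simp [poch]

theorem poch_zero_right (hσ : 0 < σ - ((n : ℝ) - 1)) : poch σ n 0 = 1 := by
  simp [poch, (ascPochhammer_pos n _ hσ).ne']

theorem poch_nonneg (hσ : 0 < σ - ((n : ℝ) - 1)) (k : ℕ) : 0 ≤ poch σ n k :=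
  div_nonneg (ascPochhammer_pos n _ hσ).le
    (ascPochhammer_pos n _ (by linarith [k.cast_nonneg (α := ℝ)])).le

theorem poch_le_one (hσ : 0 < σ - ((n : ℝ) - 1)) (k : ℕ) : poch σ n k ≤ 1 :=
  div_le_one_of_le₀ (ascPochhammer_eval_le_eval n hσ (by linarith [k.cast_nonneg (α := ℝ)]))
    (ascPochhammer_pos n _ (by linarith [k.cast_nonneg (α := ℝ)])).le

theorem poch_succ (σ : ℝ) (n k : ℕ) :
    poch σ (n + 1) k = (σ - n) / (σ - n + k) * poch σ n k := by
  simp only [poch, ascPochhammer_eval_succ_left, Nat.cast_add_one]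
  rw [div_mul_div_comm]
  congr 2 <;> ring_nf

theorem summable_poch_mul_pow (hσ : 0 < σ - ((n : ℝ) - 1)) {r : ℝ} (hr0 : 0 ≤ r) (hr : r < 1) :
    Summable fun k => poch σ n k * r ^ k :=
  (summable_geometric_of_lt_one hr0 hr).of_nonneg_of_le
    (fun k => mul_nonneg (poch_nonneg hσ k) (pow_nonneg hr0 k))
    (fun k => mul_le_of_le_one_left (pow_nonneg hr0 k) (poch_le_one hσ k))

end poch

theorem Complex.norm_sub_one_lt_norm_add_one {w : ℂ} (hw : 0 < w.re) : ‖w - 1‖ < ‖w + 1‖ := by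
  have key : ‖w - 1‖ ^ 2 < ‖w + 1‖ ^ 2 := by
    simp only [Complex.sq_norm, Complex.normSq_apply, sub_re, sub_im, add_re, add_im, one_re,
      one_im]
    nlinarith
  exact lt_of_pow_lt_pow_left₀ 2 (norm_nonneg _) key

theorem Complex.norm_one_add_div_one_sub_le {w : ℂ} {r : ℝ} (hw : ‖w‖ ≤ r) (hr : r < 1) :
    ‖(1 + w) / (1 - w)‖ ≤ (1 + r) / (1 - r) := by
  have hden : 1 - ‖w‖ ≤ ‖1 - w‖ := by simpa using norm_sub_norm_le (1 : ℂ) w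
  have hnum : ‖1 + w‖ ≤ 1 + ‖w‖ := by simpa using norm_add_le (1 : ℂ) w
  have hw1 : 0 < 1 - ‖w‖ := by linarith
  calc ‖(1 + w) / (1 - w)‖ ≤ (1 + ‖w‖) / (1 - ‖w‖) := by
        rw [norm_div]; exact div_le_div₀ (by positivity) hnum hw1 hden
    _ ≤ (1 + r) / (1 - r) := by
        rw [div_le_div_iff₀ hw1 (by linarith)]; nlinarith

/-- Schwarz's lemma applied to the Cayley transform `(p - 1) / (p + 1)`. -/
theorem IsCara.norm_le {p : ℂ → ℂ} (hp : IsCara p) {z : ℂ} (hz : ‖z‖ < 1) :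
    ‖p z‖ ≤ (1 + ‖z‖) / (1 - ‖z‖) := by
  obtain ⟨hd, h0, hre⟩ := hp
  have hlt : ∀ ζ ∈ Metric.ball (0 : ℂ) 1, ‖p ζ - 1‖ < ‖p ζ + 1‖ := fun ζ hζ =>
    norm_sub_one_lt_norm_add_one (hre ζ hζ)
  have hne : ∀ ζ ∈ Metric.ball (0 : ℂ) 1, p ζ + 1 ≠ 0 := fun ζ hζ h =>
    (norm_nonneg _).not_gt (norm_zero (E := ℂ) ▸ h ▸ hlt ζ hζ)
  set φ : ℂ → ℂ := fun ζ => (p ζ - 1) / (p ζ + 1)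
  have hmaps : Set.MapsTo φ (Metric.ball 0 1) (Metric.closedBall 0 1) := fun ζ hζ => by
    rw [Metric.mem_closedBall, dist_zero_right, norm_div]
    exact div_le_one_of_le₀ (hlt ζ hζ).le (norm_nonneg _)
  have hφ : ‖φ z‖ ≤ ‖z‖ := norm_le_norm_of_mapsTo_ball
    ((hd.sub_const 1).div (hd.add_const 1) hne) hmaps (by simp [φ, h0]) hz
  have hpz : p z = (1 + φ z) / (1 - φ z) := by
    have hφp : φ z * (p z + 1) = p z - 1 := div_mul_cancel₀ _ (hne z (mem_ball_zero_iff.mpr hz))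
    have hφ1 : 1 - φ z ≠ 0 := sub_ne_zero.mpr fun h => by
      rw [← h, norm_one] at hφ; linarith
    rw [eq_div_iff hφ1]
    linear_combination -hφp
  rw [hpz]
  exact norm_one_add_div_one_sub_le hφ hz

def caraCoeff : ℕ → ℝ
  | 0 => 1
  | _ + 1 => 2

theorem caraCoeff_nonneg (k : ℕ) : 0 ≤ caraCoeff k := by
  cases k <;> norm_num [caraCoeff]

theorem summable_caraCoeff_mul {b : ℕ → ℝ} (hb : Summable b) :
    Summable fun k => caraCoeff k * b k :=
  (summable_nat_add_iff 1).mp <| by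
    simpa only [caraCoeff] using ((summable_nat_add_iff 1).mpr hb).mul_left 2

theorem tsum_caraCoeff_mul {b : ℕ → ℝ} (hb : Summable b) :
    ∑' k, caraCoeff k * b k = b 0 + 2 * ∑' k, b (k + 1) := by
  rw [(summable_caraCoeff_mul hb).tsum_eq_zero_add]
  simp only [caraCoeff, one_mul, tsum_mul_left]

theorem one_add_div_one_sub_eq_tsum_caraCoeff {r : ℝ} (hr0 : 0 ≤ r) (hr : r < 1) :
    (1 + r) / (1 - r) = ∑' k, caraCoeff k * r ^ k := by
  rw [tsum_caraCoeff_mul (summable_geometric_of_lt_one hr0 hr)]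
  simp only [pow_succ, tsum_mul_right, tsum_geometric_of_lt_one hr0 hr]
  field_simp [(sub_pos.mpr hr).ne']
  ring

section integral

variable {l : ℝ} {c : ℕ → ℝ}

theorem integral_rpow_sub_one (hl : 0 < l) : ∫ s in (0 : ℝ)..1, s ^ (l - 1) = 1 / l := by
  rw [integral_rpow (Or.inl (by linarith)), sub_add_cancel, Real.one_rpow, Real.zero_rpow hl.ne',
    sub_zero]

theorem intervalIntegrable_rpow_mul_tsum_pow (hl : 0 < l) (hc : ∀ k, 0 ≤ c k) (hsum : Summable c) :
    IntervalIntegrable (fun s : ℝ => s ^ (l - 1) * ∑' k, c k * s ^ k) volume 0 1 := by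
  refine ((intervalIntegral.intervalIntegrable_rpow' (r := l - 1) (by linarith)).const_mul
    (∑' k, c k)).mono_fun ?_ ?_
  · refine ((measurable_id.pow_const _).mul (Measurable.tsum fun k => ?_)).aestronglyMeasurable
    exact measurable_const.mul (measurable_id.pow_const k)
  · rw [Set.uIoc_of_le zero_le_one, Filter.EventuallyLE, ae_restrict_iff' measurableSet_Ioc]
    refine Filter.Eventually.of_forall fun s hs => ?_
    have hpow : ∀ k, c k * s ^ k ≤ c k := fun k =>
      mul_le_of_le_one_right (hc k) (pow_le_one₀ hs.1.le hs.2)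
    have hsa : 0 ≤ s ^ (l - 1) := Real.rpow_nonneg hs.1.le _
    have hterm : ∀ k, 0 ≤ c k * s ^ k := fun k => mul_nonneg (hc k) (pow_nonneg hs.1.le k)
    rw [Real.norm_of_nonneg (mul_nonneg hsa (tsum_nonneg hterm)),
      Real.norm_of_nonneg (mul_nonneg (tsum_nonneg hc) hsa), mul_comm (∑' k, c k)]
    exact mul_le_mul_of_nonneg_left
      ((hsum.of_nonneg_of_le hterm hpow).tsum_le_tsum hpow hsum) hsa

theorem integral_rpow_mul_tsum_pow (hl : 0 < l) (hc : ∀ k, 0 ≤ c k) (hsum : Summable c) :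
    ∫ s in (0 : ℝ)..1, s ^ (l - 1) * ∑' k, c k * s ^ k = ∑' k, c k / (l + k) := by
  have hlk : ∀ k : ℕ, 0 < l + k := fun k => by positivity
  have hint : ∀ k : ℕ, ∫ s in Set.Ioc (0 : ℝ) 1, c k * s ^ (l + k - 1) = c k / (l + k) :=
    fun k => by
      rw [← intervalIntegral.integral_of_le zero_le_one, intervalIntegral.integral_const_mul,
        integral_rpow_sub_one (hlk k), mul_one_div]
  have hnorm : ∀ k : ℕ, ∫ s in Set.Ioc (0 : ℝ) 1, ‖c k * s ^ (l + k - 1)‖ = c k / (l + k) :=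
    fun k => by
      rw [← hint k]
      refine setIntegral_congr_fun measurableSet_Ioc fun s hs => Real.norm_of_nonneg ?_
      exact mul_nonneg (hc k) (Real.rpow_nonneg hs.1.le _)
  rw [intervalIntegral.integral_of_le zero_le_one, ← tsum_congr hint,
    integral_tsum_of_summable_integral_norm]
  · refine setIntegral_congr_fun measurableSet_Ioc fun s hs => ?_
    rw [← tsum_mul_left]
    refine tsum_congr fun k => ?_
    rw [add_sub_right_comm, Real.rpow_add hs.1, Real.rpow_natCast]
    ring
  · exact fun k =>
      ((intervalIntegral.intervalIntegrable_rpow' (by linarith [hlk k])).1).const_mul _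
  · simp only [hnorm]
    exact (hsum.div_const l).of_nonneg_of_le (fun k => div_nonneg (hc k) (hlk k).le)
      fun k => div_le_div_of_nonneg_left (hc k) hl (le_add_of_nonneg_right k.cast_nonneg)

end integral

/-- On Taylor coefficients the averaging operator acts as the Hadamard multiplier `l / (l + k)`,
so it carries coefficient majorants to coefficient majorants. -/
theorem norm_ofReal_mul_integral_rpow_mul_comp_le {l : ℝ} (hl : 0 < l) {f : ℂ → ℂ} {b : ℕ → ℝ}
    (hb : ∀ k, 0 ≤ b k) {z : ℂ} (hsum : Summable fun k => b k * ‖z‖ ^ k)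
    (hf : ∀ w : ℂ, ‖w‖ ≤ ‖z‖ → ‖f w‖ ≤ ∑' k, b k * ‖w‖ ^ k) :
    ‖(l : ℂ) * ∫ s in (0 : ℝ)..1, ((s ^ (l - 1) : ℝ) : ℂ) * f (s * z)‖ ≤
      ∑' k, l / (l + k) * b k * ‖z‖ ^ k := by
  have hc : ∀ k, 0 ≤ b k * ‖z‖ ^ k := fun k => mul_nonneg (hb k) (pow_nonneg (norm_nonneg z) k)
  have hbound : ∀ s ∈ Set.Ioc (0 : ℝ) 1, ‖((s ^ (l - 1) : ℝ) : ℂ) * f (s * z)‖ ≤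
      s ^ (l - 1) * ∑' k, b k * ‖z‖ ^ k * s ^ k := fun s hs => by
    have hsz : ‖(s : ℂ) * z‖ = s * ‖z‖ := by
      rw [norm_mul, Complex.norm_real, Real.norm_of_nonneg hs.1.le]
    rw [norm_mul, Complex.norm_real, Real.norm_of_nonneg (Real.rpow_nonneg hs.1.le _)]
    refine mul_le_mul_of_nonneg_left ((hf _ ?_).trans_eq (tsum_congr fun k => ?_))
      (Real.rpow_nonneg hs.1.le _)
    · rw [hsz]; exact mul_le_of_le_one_left (norm_nonneg z) hs.2
    · rw [hsz]; ring
  calc ‖(l : ℂ) * ∫ s in (0 : ℝ)..1, ((s ^ (l - 1) : ℝ) : ℂ) * f (s * z)‖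
      ≤ l * ∫ s in (0 : ℝ)..1, s ^ (l - 1) * ∑' k, b k * ‖z‖ ^ k * s ^ k := by
        rw [norm_mul, Complex.norm_real, Real.norm_of_nonneg hl.le]
        exact mul_le_mul_of_nonneg_left (intervalIntegral.norm_integral_le_of_norm_le zero_le_one
          (ae_of_all _ hbound) (intervalIntegrable_rpow_mul_tsum_pow hl hc hsum)) hl.le
    _ = ∑' k, l / (l + k) * b k * ‖z‖ ^ k := by
        rw [integral_rpow_mul_tsum_pow hl hc hsum, ← tsum_mul_left]
        exact tsum_congr fun k => by ring

theorem IsCara.norm_sigmaIter_le {p : ℂ → ℂ} (hp : IsCara p) {σ : ℝ} :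
    ∀ {n : ℕ}, 0 < σ - ((n : ℝ) - 1) → ∀ {z : ℂ}, ‖z‖ < 1 →
      ‖sigmaIter σ n p z‖ ≤ ∑' k, caraCoeff k * poch σ n k * ‖z‖ ^ k
  | 0, _, z, hz => by
    simpa only [sigmaIter, poch_zero_left, mul_one,
      ← one_add_div_one_sub_eq_tsum_caraCoeff (norm_nonneg z) hz] using hp.norm_le hz
  | n + 1, hσ, z, hz => by
    have hσn : 0 < σ - n := by push_cast at hσ; linarith
    have hσn' : 0 < σ - ((n : ℝ) - 1) := by linarith
    have key := norm_ofReal_mul_integral_rpow_mul_comp_le hσn (f := sigmaIter σ n p)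
      (fun k => mul_nonneg (caraCoeff_nonneg k) (poch_nonneg hσn' k))
      (by simpa only [mul_assoc] using
        summable_caraCoeff_mul (summable_poch_mul_pow hσn' (norm_nonneg z) hz))
      (fun w hw => hp.norm_sigmaIter_le hσn' (hw.trans_lt hz))
    convert key using 1
    · simp only [sigmaIter, sub_sub, Complex.ofReal_sub, Complex.ofReal_natCast]
    · exact tsum_congr fun k => by rw [poch_succ]; ring

/-- Growth upper bound for members of `P_n^σ`:
`|p_{σ,n}(z)| ≤ 1 + 2 Σ_{k≥1} [σ]_{n/k} r^k` for `|z| = r < 1`. -/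
theorem stmt7 (σ : ℝ) (n : ℕ) (hσ : 0 < σ - ((n : ℝ) - 1))
    (q : ℂ → ℂ) (hq : MemPn σ n q)
    (z : ℂ) (r : ℝ) (hz : ‖z‖ = r) (hr : r < 1) :
    ‖q z‖ ≤ 1 + 2 * ∑' k : ℕ, poch σ n (k + 1) * r ^ (k + 1) := by
  obtain ⟨p, hp, hpq⟩ := hq
  subst hz
  calc ‖q z‖ = ‖sigmaIter σ n p z‖ := by rw [hpq z (mem_ball_zero_iff.mpr hr)]
    _ ≤ ∑' k, caraCoeff k * (poch σ n k * ‖z‖ ^ k) := by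
        simpa only [mul_assoc] using hp.norm_sigmaIter_le hσ hr
    _ = 1 + 2 * ∑' k : ℕ, poch σ n (k + 1) * ‖z‖ ^ (k + 1) := by
        rw [tsum_caraCoeff_mul (summable_poch_mul_pow hσ (norm_nonneg z) hr), poch_zero_right hσ,
          pow_zero, mul_one]
end
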